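/- Let $h > 0$, let $E \subset \{x_1 = 0\} \cap B_R(0) \subset \mathbb{R}^n$ be a convex set of dimension $k$ with $k$-dimensional Hausdorff measure $m > 0$ and mass center $0$, and let $c > 0$. Then the convex hull $\operatorname{conv}(E \cup c B_h(0))$ has $n$-dimensional Lebesgue measure at least $C(n, k, c) \, m \, h^{n-k}$, and its intersection with $\{x_1 > 0\}$ has measure at least $\frac{1}{2} C(n,k,c) \, m \, h^{n-k}$. -/

import Mathlib

/-!
`E` lies in its affine span `s`, of dimension `k`. Splitting space orthogonally along the
direction of `s`, the set `E + B_ρ` contains a copy of the product of `E` with the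
`(n - k)`-dimensional ball of radius `ρ`, so its volume is at least a fixed multiple of
`μH[k] E · ρ ^ (n - k)`: on a `k`-dimensional inner product space `μH[k]` is a constant multiple
of Lebesgue measure. The convex hull of `E ∪ B_ρ` contains `(E + B_ρ) / 2`. For the half-space,
the reflection in `{x₁ = 0}` fixes `E` and the ball, hence the convex hull, and swaps the two
open half-spaces, while the hyperplane itself is null.
-/

open MeasureTheory Module Set Metric
open scoped Pointwise RealInnerProductSpace

theorem half_smul_add_subset_convexHull_union {E : Type*} [AddCommGroup E] [Module ℝ E]
    (s t : Set E) : (1 / 2 : ℝ) • (s + t) ⊆ convexHull ℝ (s ∪ t) := by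
  rintro _ ⟨_, ⟨x, hx, y, hy, rfl⟩, rfl⟩
  change (1 / 2 : ℝ) • (x + y) ∈ _
  rw [smul_add]
  refine convex_convexHull ℝ (s ∪ t) (subset_convexHull ℝ (s ∪ t) (Or.inl hx))
    (subset_convexHull ℝ (s ∪ t) (Or.inr hy)) ?_ ?_ ?_ <;> norm_num

/-- `addHaarScalarFactor volume μH[k]` is the factor turning `μH[k]` into `μHE[k]`, which is
Lebesgue measure on every `k`-dimensional inner product space. -/
noncomputable def convexHullVolumeConst (n k : ℕ) (c : ℝ) : ℝ :=
  (1 / 2) ^ n * c ^ (n - k) *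
    (Measure.addHaarScalarFactor (volume : Measure (EuclideanSpace ℝ (Fin k))) μH[k] : ℝ) *
    (volume (ball (0 : EuclideanSpace ℝ (Fin (n - k))) 1)).toReal

theorem convexHullVolumeConst_pos (n k : ℕ) {c : ℝ} (hc : 0 < c) :
    0 < convexHullVolumeConst n k c := by
  have hκ := Measure.addHaarScalarFactor_volume_hausdorffMeasure_ne_zero k
  have hω : 0 < (volume (ball (0 : EuclideanSpace ℝ (Fin (n - k))) 1)).toReal :=
    ENNReal.toReal_pos (measure_ball_pos _ _ one_pos).ne' measure_ball_lt_top.ne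
  unfold convexHullVolumeConst
  positivity

section InnerProductSpace

variable {F : Type*} [NormedAddCommGroup F] [InnerProductSpace ℝ F]

theorem inner_reflection_orthogonal_singleton (v x : F) :
    ⟪v, (ℝ ∙ v)ᗮ.reflection x⟫ = -⟪v, x⟫ := by
  calc ⟪v, (ℝ ∙ v)ᗮ.reflection x⟫
      = ⟪(ℝ ∙ v)ᗮ.reflection v, (ℝ ∙ v)ᗮ.reflection ((ℝ ∙ v)ᗮ.reflection x)⟫ :=
        (LinearIsometryEquiv.inner_map_map _ _ _).symm
    _ = -⟪v, x⟫ := by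
        rw [Submodule.reflection_orthogonalComplement_singleton_eq_neg,
          Submodule.reflection_reflection, inner_neg_left]

theorem reflection_image_convexHull_union_ball {K : Submodule ℝ F} [K.HasOrthogonalProjection]
    {A : Set F} (hA : A ⊆ K) (ρ : ℝ) :
    K.reflection '' convexHull ℝ (A ∪ ball 0 ρ) = convexHull ℝ (A ∪ ball 0 ρ) := by
  have hfix : K.reflection '' A = A := by
    refine (image_congr fun x hx => ?_).trans (image_id A)
    exact Submodule.reflection_mem_subspace_eq_self (hA hx)
  calc K.reflection '' convexHull ℝ (A ∪ ball 0 ρ)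
      = convexHull ℝ (K.reflection '' (A ∪ ball 0 ρ)) :=
        LinearMap.image_convexHull K.reflection.toLinearIsometry.toLinearMap _
    _ = convexHull ℝ (A ∪ ball 0 ρ) := by
        rw [image_union, hfix, LinearIsometryEquiv.image_ball, map_zero]

variable [FiniteDimensional ℝ F] [MeasurableSpace F] [BorelSpace F]

theorem volume_image_linearIsometryEquiv (σ : F ≃ₗᵢ[ℝ] F) (S : Set F) :
    volume (σ '' S) = volume S := by
  rw [σ.image_eq_preimage_symm]
  have hσ : MeasurePreserving σ.symm.toMeasurableEquiv := σ.symm.measurePreserving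
  exact hσ.measure_preimage_equiv S

theorem volume_le_two_mul_volume_inter_halfSpace {v : F} (hv : v ≠ 0) {K : Set F}
    (hK : (ℝ ∙ v)ᗮ.reflection '' K = K) :
    volume K ≤ 2 * volume (K ∩ {x | 0 < ⟪v, x⟫}) := by
  set σ := (ℝ ∙ v)ᗮ.reflection
  set Kpos := K ∩ {x | 0 < ⟪v, x⟫}
  have hcover : K ⊆ Kpos ∪ σ '' Kpos ∪ (ℝ ∙ v)ᗮ := by
    intro x hx
    rcases lt_trichotomy 0 ⟪v, x⟫ with h | h | h
    · exact Or.inl (Or.inl ⟨hx, h⟩)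
    · exact Or.inr (Submodule.mem_orthogonal_singleton_iff_inner_right.2 h.symm)
    · refine Or.inl (Or.inr ⟨σ x, ⟨hK ▸ mem_image_of_mem σ hx, ?_⟩, σ.apply_symm_apply x⟩)
      change 0 < ⟪v, σ x⟫
      linarith [inner_reflection_orthogonal_singleton v x]
  have hnull : volume ((ℝ ∙ v)ᗮ : Set F) = 0 :=
    Measure.addHaar_submodule _ _ (by simpa [Submodule.orthogonal_eq_top_iff] using hv)
  calc volume K ≤ volume (Kpos ∪ σ '' Kpos ∪ (ℝ ∙ v)ᗮ) := measure_mono hcover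
    _ ≤ volume (Kpos ∪ σ '' Kpos) := by
        refine (measure_union_le _ _).trans ?_
        rw [hnull, add_zero]
    _ ≤ volume Kpos + volume (σ '' Kpos) := measure_union_le _ _
    _ = 2 * volume Kpos := by rw [volume_image_linearIsometryEquiv, two_mul]

theorem volume_ball_eq_ofReal_pow_mul_volume_unitBall (x : F) {r : ℝ} (hr : 0 < r) :
    volume (ball x r) = ENNReal.ofReal (r ^ finrank ℝ F) *
      volume (ball (0 : EuclideanSpace ℝ (Fin (finrank ℝ F))) 1) := by
  rw [Measure.addHaar_ball_of_pos _ _ hr,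
    ← (stdOrthonormalBasis ℝ F).measurePreserving_repr.measure_preimage
      measurableSet_ball.nullMeasurableSet, LinearIsometryEquiv.preimage_ball, map_zero]

theorem euclideanHausdorffMeasure_mul_volume_ball_le_volume_add_ball (s : AffineSubspace ℝ F)
    {A : Set F} (hA : A ⊆ s) (ρ : ℝ) :
    μHE[finrank ℝ s.direction] A * volume (ball (0 : s.directionᗮ) ρ) ≤
      volume (A + ball (0 : F) ρ) := by
  rcases A.eq_empty_or_nonempty with rfl | ⟨p, hp⟩
  · simp
  set V := s.direction
  set Φ := V.measurableEquivProd p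
  set T : Set V := (fun v : V => (v : F) + p) ⁻¹' A
  have hAT : (fun v : V => (v : F) + p) '' T = A := by
    refine image_preimage_eq_of_subset fun x hx => ?_
    exact ⟨⟨x - p, s.vsub_mem_direction (hA hx) (hA hp)⟩, sub_add_cancel x p⟩
  have hμA : μHE[finrank ℝ V] A = volume T := by
    have hiso : Isometry fun v : V => (v : F) + p :=
      (IsometryEquiv.addRight p).isometry.comp isometry_subtype_coe
    rw [← hAT, hiso.euclideanHausdorffMeasure_image,
      InnerProductSpace.euclideanHausdorffMeasure_eq_volume]
  have hsub : Φ ⁻¹' (T ×ˢ ball 0 ρ) ⊆ A + ball 0 ρ := by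
    intro x hx
    have hx_eq : ((Φ x).1 + p) + ((Φ x).2 : F) = x := by
      have h := V.measurableEquivProd_symm_apply p (Φ x)
      rw [Φ.symm_apply_apply, vadd_eq_add] at h
      rw [add_right_comm]; exact h.symm
    exact ⟨_, hx.1, _, by simpa using hx.2, hx_eq⟩
  calc μHE[finrank ℝ V] A * volume (ball (0 : Vᗮ) ρ) = volume (T ×ˢ ball (0 : Vᗮ) ρ) := by
        rw [hμA, Measure.volume_eq_prod, Measure.prod_prod]
    _ = volume (Φ ⁻¹' (T ×ˢ ball 0 ρ)) := by
        rw [← (V.measurePreserving_measurableEquivProd p).measure_preimage_equiv,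
          InnerProductSpace.euclideanHausdorffMeasure_eq_volume]
    _ ≤ volume (A + ball 0 ρ) := measure_mono hsub

theorem ofReal_mul_hausdorffMeasure_le_volume_convexHull_union_ball (s : AffineSubspace ℝ F)
    {A : Set F} (hA : A ⊆ s) {c h : ℝ} (hc : 0 < c) (hh : 0 < h) :
    ENNReal.ofReal (convexHullVolumeConst (finrank ℝ F) (finrank ℝ s.direction) c *
        h ^ (finrank ℝ F - finrank ℝ s.direction)) * μH[finrank ℝ s.direction] A ≤
      volume (convexHull ℝ (A ∪ ball 0 (c * h))) := by
  set V := s.direction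
  set N := finrank ℝ F
  set k := finrank ℝ V
  have hcodim : finrank ℝ Vᗮ = N - k := by
    have := V.finrank_add_finrank_orthogonal
    omega
  set κ := Measure.addHaarScalarFactor (volume : Measure (EuclideanSpace ℝ (Fin k))) μH[k]
  have hμHE : μHE[k] A = κ * μH[k] A := rfl
  calc ENNReal.ofReal (convexHullVolumeConst N k c * h ^ (N - k)) * μH[k] A
      = ENNReal.ofReal ((1 / 2) ^ N) * (μHE[k] A * volume (ball (0 : Vᗮ) (c * h))) := by
        rw [hμHE, volume_ball_eq_ofReal_pow_mul_volume_unitBall _ (mul_pos hc hh), hcodim,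
          convexHullVolumeConst, mul_pow, ENNReal.ofReal_mul (by positivity),
          ENNReal.ofReal_mul (by positivity), ENNReal.ofReal_mul (by positivity),
          ENNReal.ofReal_mul (by positivity), ENNReal.ofReal_mul (by positivity),
          ENNReal.ofReal_coe_nnreal, ENNReal.ofReal_toReal measure_ball_lt_top.ne]
        ring
    _ ≤ ENNReal.ofReal ((1 / 2) ^ N) * volume (A + ball 0 (c * h)) := by
        gcongr
        exact euclideanHausdorffMeasure_mul_volume_ball_le_volume_add_ball s hA _
    _ = volume ((1 / 2 : ℝ) • (A + ball 0 (c * h))) :=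
        (Measure.addHaar_smul_of_nonneg _ (by norm_num) _).symm
    _ ≤ volume (convexHull ℝ (A ∪ ball 0 (c * h))) :=
        measure_mono (half_smul_add_subset_convexHull_union _ _)

end InnerProductSpace

theorem volume_convexHull_lower_bound_general (n k : ℕ) (hn : 0 < n) (c : ℝ) (hc : 0 < c) :
    ∃ C : ℝ, 0 < C ∧ ∀ (R h m : ℝ) (E : Set (EuclideanSpace ℝ (Fin n))),
      0 < R → 0 < h → 0 < m → Convex ℝ E →
      E ⊆ {x : EuclideanSpace ℝ (Fin n) | x ⟨0, hn⟩ = 0} ∩ Metric.ball 0 R →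
      Module.finrank ℝ (vectorSpan ℝ E) = k →
      (μH[(k : ℝ)] E).toReal = m →
      (∫ x, x ∂((μH[(k : ℝ)]).restrict E)) = (0 : EuclideanSpace ℝ (Fin n)) →
      ENNReal.ofReal (C * m * h ^ (n - k)) ≤
          volume (convexHull ℝ (E ∪ Metric.ball (0 : EuclideanSpace ℝ (Fin n)) (c * h))) ∧
        ENNReal.ofReal (C / 2 * m * h ^ (n - k)) ≤
          volume (convexHull ℝ (E ∪ Metric.ball (0 : EuclideanSpace ℝ (Fin n)) (c * h)) ∩
            {x : EuclideanSpace ℝ (Fin n) | 0 < x ⟨0, hn⟩}) := by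
  have hC := convexHullVolumeConst_pos n k hc
  refine ⟨convexHullVolumeConst n k c, hC, fun R h m E _ hh hm _ hE hrank hmeas _ => ?_⟩
  have hμ : μH[(k : ℝ)] E = ENNReal.ofReal m := by
    refine hmeas ▸ (ENNReal.ofReal_toReal fun htop => ?_).symm
    rw [htop, ENNReal.toReal_top] at hmeas
    exact hm.ne hmeas
  have hdim : finrank ℝ (affineSpan ℝ E).direction = k := by rw [direction_affineSpan, hrank]
  have hfull := ofReal_mul_hausdorffMeasure_le_volume_convexHull_union_ball (affineSpan ℝ E)
    (subset_affineSpan ℝ E) hc hh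
  rw [hdim, finrank_euclideanSpace_fin, hμ, ← ENNReal.ofReal_mul (by positivity),
    mul_right_comm] at hfull
  set v := EuclideanSpace.single (⟨0, hn⟩ : Fin n) (1 : ℝ)
  have hEv : E ⊆ (ℝ ∙ v)ᗮ := fun x hx => Submodule.mem_orthogonal_singleton_iff_inner_right.2
    (by simpa [v, EuclideanSpace.inner_single_left] using (hE hx).1)
  have hhalf := volume_le_two_mul_volume_inter_halfSpace (v := v) (by simp [v])
    (reflection_image_convexHull_union_ball hEv (c * h))
  simp only [v, EuclideanSpace.inner_single_left, map_one, one_mul] at hhalf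
  refine ⟨hfull, ?_⟩
  calc ENNReal.ofReal (convexHullVolumeConst n k c / 2 * m * h ^ (n - k))
      = ENNReal.ofReal (convexHullVolumeConst n k c * m * h ^ (n - k)) / 2 := by
        rw [← ENNReal.ofReal_ofNat 2, ← ENNReal.ofReal_div_of_pos two_pos]
        ring_nf
    _ ≤ _ := ENNReal.div_le_of_le_mul' (hfull.trans hhalf)

/-- Volume lower bound for the convex hull of a `k`-dimensional convex set `E ⊆ {x₁ = 0}`
with mass center `0` and a small ball `B_{ch}(0)`. -/
theorem volume_convexHull_lower_bound (n k : ℕ) (hn : 0 < n) (hkn : k < n) (c : ℝ) (hc : 0 < c) :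
    ∃ C : ℝ, 0 < C ∧ ∀ (R h m : ℝ) (E : Set (EuclideanSpace ℝ (Fin n))),
      0 < R → 0 < h → 0 < m → Convex ℝ E →
      E ⊆ {x : EuclideanSpace ℝ (Fin n) | x ⟨0, hn⟩ = 0} ∩ Metric.ball 0 R →
      Module.finrank ℝ (vectorSpan ℝ E) = k →
      (μH[(k : ℝ)] E).toReal = m →
      (∫ x, x ∂((μH[(k : ℝ)]).restrict E)) = (0 : EuclideanSpace ℝ (Fin n)) →
      ENNReal.ofReal (C * m * h ^ (n - k)) ≤
          volume (convexHull ℝ (E ∪ Metric.ball (0 : EuclideanSpace ℝ (Fin n)) (c * h))) ∧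
        ENNReal.ofReal (C / 2 * m * h ^ (n - k)) ≤
          volume (convexHull ℝ (E ∪ Metric.ball (0 : EuclideanSpace ℝ (Fin n)) (c * h)) ∩
            {x : EuclideanSpace ℝ (Fin n) | 0 < x ⟨0, hn⟩}) :=
  volume_convexHull_lower_bound_general n k hn c hc
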